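/- Let A be a commutative unital algebra that is finitely generated as an algebra over ℂ, let m ⊆ A be a maximal ideal, let M be a finitely generated A-module, and let i be a natural number. If a ℂ-linear functional φ : M → ℂ vanishes on the submodule mⁱ·M, then φ is A-finite, i.e. the A-submodule of the ℂ-linear dual of M generated by φ is finite-dimensional over ℂ. -/

import Mathlib

/-!
`A ⧸ mⁱ` is Noetherian of Krull dimension zero, hence Artinian, hence finite over `ℂ`
(Artinian algebras of finite type over a Jacobson ring are finite). So `M ⧸ mⁱM`, a finite
`A ⧸ mⁱ`-module, is finite-dimensional over `ℂ`. Since `mⁱM` is an `A`-submodule, every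
translate `x ↦ φ (a • x)` still vanishes on it, so the `A`-span of `φ` lies in the annihilator
of `mⁱM` in the dual, which is the dual of the finite-dimensional space `M ⧸ mⁱM`.
-/

/-- A ℂ-linear functional `φ` on `M` is *A-finite* if the `A`-submodule of the
ℂ-linear dual of `M` generated by `φ` (i.e. the ℂ-span of the set of functionals
`x ↦ φ (a • x)`, `a ∈ A`) is finite-dimensional over ℂ. -/
def IsAFinite (A : Type*) [CommRing A] [Algebra ℂ A]
    {M : Type*} [AddCommGroup M] [Module A M] [Module ℂ M] [IsScalarTower ℂ A M]
    (φ : M →ₗ[ℂ] ℂ) : Prop :=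
  FiniteDimensional ℂ
    (Submodule.span ℂ {ψ : M →ₗ[ℂ] ℂ | ∃ a : A, ∀ x : M, ψ x = φ (a • x)})

theorem Ideal.isArtinianRing_quotient_pow_of_isMaximal {R : Type*} [CommRing R]
    [IsNoetherianRing R] {m : Ideal R} (hm : m.IsMaximal) (n : ℕ) :
    IsArtinianRing (R ⧸ m ^ n) := by
  have : Ring.KrullDimLE 0 (R ⧸ m ^ n) := Ring.krullDimLE_zero_iff.mpr fun J _ ↦ by
    have hpow : m ^ n ≤ J.comap (Ideal.Quotient.mk _) :=
      Ideal.mk_ker.symm.le.trans (Ideal.ker_le_comap _)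
    have hcomap : J.comap (algebraMap R (R ⧸ m ^ n)) = m :=
      (hm.eq_of_le (Ideal.IsPrime.ne_top inferInstance) (Ideal.IsPrime.le_of_pow_le hpow)).symm
    exact Ideal.isMaximal_of_isIntegral_of_isMaximal_comap J (hcomap ▸ hm)
  exact IsNoetherianRing.isArtinianRing_of_krullDimLE_zero

theorem Module.finite_quotient_pow_smul_top (R : Type*) {A M : Type*} [CommRing R]
    [IsJacobsonRing R] [IsNoetherianRing R] [CommRing A] [Algebra R A] [Algebra.FiniteType R A]
    [AddCommGroup M] [Module A M] [Module R M] [IsScalarTower R A M] [Module.Finite A M]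
    {m : Ideal A} (hm : m.IsMaximal) (n : ℕ) :
    Module.Finite R (M ⧸ (m ^ n • ⊤ : Submodule A M)) := by
  have := Algebra.FiniteType.isNoetherianRing R A
  have := Ideal.isArtinianRing_quotient_pow_of_isMaximal hm n
  have := Module.finite_of_isArtinianRing R (A ⧸ m ^ n)
  exact Module.Finite.trans (A ⧸ m ^ n) _

theorem isAFinite_of_forall_mem_eq_zero {A M : Type*} [CommRing A] [Algebra ℂ A]
    [AddCommGroup M] [Module A M] [Module ℂ M] [IsScalarTower ℂ A M]
    (N : Submodule A M) [FiniteDimensional ℂ (M ⧸ N)] {φ : M →ₗ[ℂ] ℂ}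
    (hφ : ∀ x ∈ N, φ x = 0) : IsAFinite A φ := by
  let W := N.restrictScalars ℂ
  have : FiniteDimensional ℂ (M ⧸ W) :=
    .equiv (Submodule.Quotient.restrictScalarsEquiv ℂ N).symm
  have : FiniteDimensional ℂ W.dualAnnihilator := .equiv W.dualQuotEquivDualAnnihilator
  refine Submodule.finiteDimensional_of_le (S₂ := W.dualAnnihilator) ?_
  rw [Submodule.span_le]
  rintro ψ ⟨a, hψ⟩
  rw [SetLike.mem_coe, Submodule.mem_dualAnnihilator]
  intro x hx
  rw [hψ]
  exact hφ _ (N.smul_mem a hx)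

/-- Let `A` be a commutative unital ℂ-algebra, finitely generated as a ℂ-algebra,
`m ⊆ A` a maximal ideal, `M` a finitely generated `A`-module, and `i : ℕ`.
If a ℂ-linear functional `φ : M → ℂ` vanishes on the submodule `mⁱ • M`, then `φ`
is `A`-finite. -/
theorem vanishing_on_pow_smul_isAFinite
    (A : Type*) [CommRing A] [Algebra ℂ A] [Algebra.FiniteType ℂ A]
    (m : Ideal A) (hm : m.IsMaximal)
    (M : Type*) [AddCommGroup M] [Module A M] [Module ℂ M] [IsScalarTower ℂ A M]
    [Module.Finite A M] (i : ℕ)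
    (φ : M →ₗ[ℂ] ℂ) (hφ : ∀ x ∈ (m ^ i • ⊤ : Submodule A M), φ x = 0) :
    IsAFinite A φ :=
  have := Module.finite_quotient_pow_smul_top ℂ (M := M) hm i
  isAFinite_of_forall_mem_eq_zero _ hφ
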